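/- arXiv:2006.15690 — 2 statements merged into one kernel-verified Lean document; each statement's English description precedes it below -/
import Mathlib

section
/- Consistency of bounds (Lemma 1): in the LBQL algorithm with alpha_n(s,a) <= 1 for all n and (s,a), if L_0(s,a) <= U_0(s,a) for all (s,a) and |Q'_0(s,a)| <= rho, then L_n(s,a) <= U_n(s,a) for all iterations n and all state-action pairs (s,a). -/
open MeasureTheory ProbabilityTheory Filter

namespace LBQL

noncomputable section

variable {S A W : Type*}

/-- The state-action trajectory generated by the transition function `f`, a deterministic
Markov policy `π`, the initial state-action pair `sa`, and the disturbance sequence `w`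
(with the convention that `w t` plays the role of `w_{t+1}`, i.e.
`s_{t+1} = f (s_t, a_t, w t)` and `a_{t+1} = π (s_{t+1})`). -/
def traj (f : S → A → W → S) (π : S → A) (sa : S × A) (w : ℕ → W) : ℕ → S × A
  | 0 => sa
  | t + 1 =>
      (f (traj f π sa w t).1 (traj f π sa w t).2 (w t),
        π (f (traj f π sa w t).1 (traj f π sa w t).2 (w t)))

/-- The discounted infinite-horizon action-value `Q^π(s,a)` of the deterministic Markov
policy `π`, defined as the expectation, over an i.i.d. disturbance sequence `wseq` on the
probability space `(Ω, μ)`, of the total discounted reward. -/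
def Qpol {Ω : Type*} [MeasurableSpace Ω] (μ : Measure Ω) (wseq : ℕ → Ω → W)
    (γ : ℝ) (r : S → A → ℝ) (f : S → A → W → S) (π : S → A) (s : S) (a : A) : ℝ :=
  ∫ ω, ∑' t, γ ^ t *
      r (traj f π (s, a) (fun i => wseq i ω) t).1
        (traj f π (s, a) (fun i => wseq i ω) t).2 ∂μ

/-- The optimal action-value function `Q*(s,a) = max_π Q^π(s,a)`. -/
def Qopt {Ω : Type*} [MeasurableSpace Ω] (μ : Measure Ω) (wseq : ℕ → Ω → W)
    (γ : ℝ) (r : S → A → ℝ) (f : S → A → W → S) (s : S) (a : A) : ℝ :=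
  ⨆ π : S → A, Qpol μ wseq γ r f π s a

/-- Transition function of the absorption-time (absorbing-chain) formulation: the state
space is augmented with an absorbing state (`none`); the disturbance is a pair of a
Bernoulli "survival" coin and an original disturbance, and the chain is killed (absorbed)
whenever the coin is `false`. -/
def habs (f : S → A → W → S) : Option S → A → Bool × W → Option S
  | some s, a, d => if d.1 then some (f s a d.2) else none
  | none, _, _ => none

/-- Reward of the absorbing chain: `0` at the absorbing state. -/
def rbar (r : S → A → ℝ) : Option S → A → ℝ
  | some s, a => r s a
  | none, _ => 0

/-- Extension of a function on `S × A` to the augmented state space, by `0` at the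
absorbing state (the class `Q-cal`). -/
def ext0 (Q : S → A → ℝ) : Option S → A → ℝ
  | some s, a => Q s a
  | none, _ => 0

/-- Extension of a deterministic Markov policy to the augmented state space. -/
def extPolicy [Nonempty A] (π : S → A) : Option S → A
  | some s => π s
  | none => Classical.arbitrary A

/-- The absorption time of a realized disturbance path of the absorbing chain: the first
time at which the chain is absorbed (equivalently, the first `n` such that one of the
survival coins among `d 0, …, d (n-1)` has failed). -/
def absTime (d : ℕ → Bool × W) : ℕ := sInf {n | ∃ i < n, (d i).1 = false}

/-- A canonical greedy policy for an action-value function `φ`. -/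
def greedy {S' : Type*} [Fintype A] [Nonempty A] (φ : S' → A → ℝ) (s : S') : A :=
  Classical.choose (Finite.exists_max (φ s))

/-- The upper-bound inner dynamic program: `innerU h g w t m s a` is the (perfect
information relaxation) value at time `t` with `m` periods remaining, per-period reward
`g` (reward minus penalty), realized disturbance path `w` and transition function `h`;
the terminal value is `0` and the continuation is maximized over actions. -/
def innerU {S' D : Type*} [Fintype A] [Nonempty A] (h : S' → A → D → S')
    (g : ℕ → S' → A → ℝ) (w : ℕ → D) : ℕ → ℕ → S' → A → ℝ
  | _, 0, _, _ => 0
  | t, m + 1, s, a => g t s a + ⨆ a' : A, innerU h g w (t + 1) m (h s a (w t)) a'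

/-- The lower-bound inner dynamic program: as `innerU`, but the continuation action is
chosen by the policy `π`. -/
def innerL {S' D : Type*} (h : S' → A → D → S') (π : S' → A)
    (g : ℕ → S' → A → ℝ) (w : ℕ → D) : ℕ → ℕ → S' → A → ℝ
  | _, 0, _, _ => 0
  | t, m + 1, s, a =>
      g t s a + innerL h π g w (t + 1) m (h s a (w t)) (π (h s a (w t)))

/-- The empirical (batch) penalty `ζ-hat_t^π(s, a, w_{t+1} | φ)`, where the conditional
expectation is estimated by the sample average over a batch of `K` disturbances. -/
def penB (f : S → A → W → S) (K : ℕ) (φ : Option S → A → ℝ) (π : Option S → A)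
    (path : ℕ → Bool × W) (batch : ℕ → Option S → A → Fin K → Bool × W)
    (t : ℕ) (s : Option S) (a : A) : ℝ :=
  φ (habs f s a (path t)) (π (habs f s a (path t))) -
    (K : ℝ)⁻¹ * ∑ k : Fin K,
      φ (habs f s a (batch t s a k)) (π (habs f s a (batch t s a k)))

/-- The exact penalty `ζ_t^π(s, a, w_{t+1} | φ)`, where the expectation is taken with
respect to the distribution `νa` of the absorbing-chain disturbance. -/
def penE [MeasurableSpace W] (f : S → A → W → S) (νa : Measure (Bool × W))
    (φ : Option S → A → ℝ) (π : Option S → A) (path : ℕ → Bool × W)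
    (t : ℕ) (s : Option S) (a : A) : ℝ :=
  φ (habs f s a (path t)) (π (habs f s a (path t))) -
    ∫ d, φ (habs f s a d) (π (habs f s a d)) ∂νa

/-- The experience-replay penalty `ζ-tilde_t^π(s, a, w_{t+1} | φ)`: the expectation is
taken with the `W`-component distributed according to `phat` and an independent
Bernoulli(γ) survival coin. -/
def penR [Fintype W] (f : S → A → W → S) (γ : ℝ) (phat : W → ℝ)
    (φ : Option S → A → ℝ) (π : Option S → A) (path : ℕ → Bool × W)
    (t : ℕ) (s : Option S) (a : A) : ℝ :=
  φ (habs f s a (path t)) (π (habs f s a (path t))) -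
    ∑ x : W, phat x *
      (γ * φ (habs f s a (true, x)) (π (habs f s a (true, x))) +
        (1 - γ) * φ (habs f s a (false, x)) (π (habs f s a (false, x))))

/-- Empirical distribution of the first `n+1` observed disturbances `wn 0, …, wn n`. -/
def empDist [DecidableEq W] (wn : ℕ → W) (n : ℕ) (x : W) : ℝ :=
  (((Finset.range (n + 1)).filter fun i => wn i = x).card : ℝ) / (n + 1)

/-- Finite geometric sum `∑_{i=0}^{m-1} γ^i`. -/
def Gsum (γ : ℝ) (m : ℕ) : ℝ := ∑ i ∈ Finset.range m, γ ^ i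

/-- A realization of the LBQL algorithm: the visited states `sn`, chosen actions `an`,
observed disturbances `wn`, stepsizes, iterates `Q, Q', L, U`, the inner sample paths
`path n` (of realized length `tau n`), the greedy policies `pol n` for `φ = Q_{n+1}` and
the realized penalty values `pen n` (common to the upper- and lower-bound inner
problems), together with the LBQL update equations. -/
structure Run [Fintype A] [Nonempty A]
    (f : S → A → W → S) (r : S → A → ℝ) (γ ρ : ℝ) where
  sn : ℕ → S
  an : ℕ → A
  wn : ℕ → W
  alpha : ℕ → S → A → ℝ
  beta : ℕ → S → A → ℝ
  Q : ℕ → S → A → ℝ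
  Q' : ℕ → S → A → ℝ
  L : ℕ → S → A → ℝ
  U : ℕ → S → A → ℝ
  path : ℕ → ℕ → Bool × W
  tau : ℕ → ℕ
  pol : ℕ → Option S → A
  pen : ℕ → ℕ → Option S → A → ℝ
  hs : ∀ n, sn (n + 1) = f (sn n) (an n) (wn n)
  halpha : ∀ n s a, 0 ≤ alpha n s a ∧ alpha n s a ≤ 1
  hbeta : ∀ n s a, 0 ≤ beta n s a ∧ beta n s a ≤ 1
  htau : ∀ n, tau n = absTime (path n)
  hpol : ∀ n s' a', ext0 (Q (n + 1)) s' a' ≤ ext0 (Q (n + 1)) s' (pol n s')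
  hQ'0 : ∀ s a, Q' 0 s a = Q 0 s a
  hQon : ∀ n, Q (n + 1) (sn n) (an n) = Q' n (sn n) (an n) + alpha n (sn n) (an n) *
      (r (sn n) (an n) + γ * (⨆ a' : A, Q' n (sn (n + 1)) a') - Q' n (sn n) (an n))
  hQoff : ∀ n s a, ¬(s = sn n ∧ a = an n) → Q (n + 1) s a = Q' n s a
  hUon : ∀ n, U (n + 1) (sn n) (an n) = max (-ρ) (U n (sn n) (an n) +
      beta n (sn n) (an n) *
        (innerU (habs f) (fun t s' a' => rbar r s' a' - pen n t s' a') (path n) 0 (tau n)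
            (some (sn n)) (an n) -
          U n (sn n) (an n)))
  hUoff : ∀ n s a, ¬(s = sn n ∧ a = an n) → U (n + 1) s a = U n s a
  hLon : ∀ n, L (n + 1) (sn n) (an n) = min ρ (L n (sn n) (an n) +
      beta n (sn n) (an n) *
        (innerL (habs f) (pol n) (fun t s' a' => rbar r s' a' - pen n t s' a') (path n) 0
            (tau n) (some (sn n)) (an n) -
          L n (sn n) (an n)))
  hLoff : ∀ n s a, ¬(s = sn n ∧ a = an n) → L (n + 1) s a = L n s a
  hQ'on : ∀ n, Q' (n + 1) (sn n) (an n) = max (L (n + 1) (sn n) (an n))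
      (min (U (n + 1) (sn n) (an n)) (Q (n + 1) (sn n) (an n)))
  hQ'off : ∀ n s a, ¬(s = sn n ∧ a = an n) → Q' (n + 1) s a = Q (n + 1) s a


/-- Index type for the noise random variables of the idealized LBQL algorithm: the
observed disturbances (indexed by the iteration `n`), the inner sample-path disturbances
(indexed by `(n, t)`), and the batch disturbances (indexed by
`(n, t, s, a, k)`, a fresh batch at each evaluation of the penalty). -/
abbrev NzIdx (S' A' : Type*) (K : ℕ) : Type _ :=
  ℕ ⊕ ((ℕ × ℕ) ⊕ (ℕ × ℕ × Option S' × A' × Fin K))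

/-- Codomain of each noise variable: `W` for the observed disturbances, `Bool × W`
(survival coin together with a disturbance) for the absorbing-chain disturbances. -/
def NzTy (W' : Type*) {S' A' : Type*} {K : ℕ} : NzIdx S' A' K → Type _
  | .inl _ => W'
  | .inr _ => Bool × W'

/-- The measurable-space structure on the codomain of each noise variable. -/
def nzms (W' : Type*) [MeasurableSpace W'] {S' A' : Type*} {K : ℕ} :
    ∀ j : NzIdx S' A' K, MeasurableSpace (NzTy W' j)
  | .inl _ => (inferInstance : MeasurableSpace W')
  | .inr _ => (inferInstance : MeasurableSpace (Bool × W'))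

/-- The family of noise random variables, assembled from the observed disturbances `wn`,
the inner sample paths `path` and the batches `batch`. -/
def nzfun {Ω W' S' A' : Type*} {K : ℕ} (wn : ℕ → Ω → W')
    (path : ℕ → ℕ → Ω → Bool × W')
    (batch : ℕ → ℕ → Option S' → A' → Fin K → Ω → Bool × W') :
    ∀ j : NzIdx S' A' K, Ω → NzTy W' j
  | .inl n => wn n
  | .inr (.inl (n, t)) => path n t
  | .inr (.inr (n, t, s, a, k)) => batch n t s a k

/-- The iteration (stage) at which a given noise variable is used. -/
def nzStage {S' A' : Type*} {K : ℕ} : NzIdx S' A' K → ℕ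
  | .inl n => n
  | .inr (.inl (n, _)) => n
  | .inr (.inr (n, _, _, _, _)) => n

/-- Index type for the noise of the LBQL algorithm with exact penalties (no batches). -/
abbrev NzIdxE : Type := ℕ ⊕ (ℕ × ℕ)

def NzTyE (W' : Type*) : NzIdxE → Type _
  | .inl _ => W'
  | .inr _ => Bool × W'

def nzmsE (W' : Type*) [MeasurableSpace W'] : ∀ j : NzIdxE, MeasurableSpace (NzTyE W' j)
  | .inl _ => (inferInstance : MeasurableSpace W')
  | .inr _ => (inferInstance : MeasurableSpace (Bool × W'))

def nzfunE {Ω W' : Type*} (wn : ℕ → Ω → W') (path : ℕ → ℕ → Ω → Bool × W') :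
    ∀ j : NzIdxE, Ω → NzTyE W' j
  | .inl n => wn n
  | .inr (n, t) => path n t

def nzStageE : NzIdxE → ℕ
  | .inl n => n
  | .inr (n, _) => n

/-- Index type for the noise of the experience-replay LBQL algorithm: observed
disturbances, the survival coins of the inner sample paths, and the uniformly random
buffer indices used to draw the inner sample paths from the replay buffer. -/
abbrev NzIdxR : Type := ℕ ⊕ ((ℕ × ℕ) ⊕ (ℕ × ℕ))

def NzTyR (W' : Type) : NzIdxR → Type
  | .inl _ => W'
  | .inr (.inl _) => Bool
  | .inr (.inr _) => ℕ

def nzmsR (W' : Type) [MeasurableSpace W'] : ∀ j : NzIdxR, MeasurableSpace (NzTyR W' j)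
  | .inl _ => (inferInstance : MeasurableSpace W')
  | .inr (.inl _) => (inferInstance : MeasurableSpace Bool)
  | .inr (.inr _) => (inferInstance : MeasurableSpace ℕ)

def nzfunR {Ω : Type*} {W' : Type} (wn : ℕ → Ω → W') (coin : ℕ → ℕ → Ω → Bool)
    (idx : ℕ → ℕ → Ω → ℕ) : ∀ j : NzIdxR, Ω → NzTyR W' j
  | .inl n => wn n
  | .inr (.inl (n, t)) => coin n t
  | .inr (.inr (n, t)) => idx n t

def nzStageR : NzIdxR → ℕ
  | .inl n => n
  | .inr (.inl (n, _)) => n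
  | .inr (.inr (n, _)) => n

/-- `LbarGen γ M Ut n` is the lower envelope
`min { Ut (n-1) (1+γ), …, Ut 1 (1+γ+⋯+γ^{n-1}), -M (1+γ+⋯+γ^n) }`. -/
def LbarGen (γ M : ℝ) (Ut : ℕ → ℝ) (n : ℕ) : ℝ :=
  (insert 0 (Finset.Ico 1 n)).inf' (Finset.insert_nonempty _ _)
    (fun j => if j = 0 then -M * Gsum γ (n + 1) else Ut j * Gsum γ (n - j + 1))

/-- `UbarGen γ M Lt n` is the upper envelope
`max { Lt (n-1) (1+γ), …, Lt 1 (1+γ+⋯+γ^{n-1}), M (1+γ+⋯+γ^n) }`. -/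
def UbarGen (γ M : ℝ) (Lt : ℕ → ℝ) (n : ℕ) : ℝ :=
  (insert 0 (Finset.Ico 1 n)).sup' (Finset.insert_nonempty _ _)
    (fun j => if j = 0 then M * Gsum γ (n + 1) else Lt j * Gsum γ (n - j + 1))

/-- As `LbarGen`, additionally including the term `Ut n` (note `Gsum γ 1 = 1`). -/
def Lbar'Gen (γ M : ℝ) (Ut : ℕ → ℝ) (n : ℕ) : ℝ :=
  (insert 0 (Finset.Icc 1 n)).inf' (Finset.insert_nonempty _ _)
    (fun j => if j = 0 then -M * Gsum γ (n + 1) else Ut j * Gsum γ (n - j + 1))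

/-- As `UbarGen`, additionally including the term `Lt n`. -/
def Ubar'Gen (γ M : ℝ) (Lt : ℕ → ℝ) (n : ℕ) : ℝ :=
  (insert 0 (Finset.Icc 1 n)).sup' (Finset.insert_nonempty _ _)
    (fun j => if j = 0 then M * Gsum γ (n + 1) else Lt j * Gsum γ (n - j + 1))

end

end LBQL

open LBQL

/-! Sharing the sample path and the penalty values, the lower inner problem follows one policy
where the upper one maximises, so `Q̂^L_0 ≤ Q̂^U_0` pathwise. The updates of `L` and `U` at the
visited pair are convex combinations with the same stepsize `β_n`, and the clipping at `±ρ`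
can only lower `L` and raise `U`, so `L ≤ U` is preserved at every iteration. -/

theorem add_mul_sub_le_add_mul_sub {α : Type*} [CommRing α] [LinearOrder α] [IsOrderedRing α]
    {β a b x y : α} (hβ0 : 0 ≤ β) (hβ1 : β ≤ 1) (hab : a ≤ b) (hxy : x ≤ y) :
    a + β * (x - a) ≤ b + β * (y - b) := by
  calc a + β * (x - a) = (1 - β) * a + β * x := by ring
    _ ≤ (1 - β) * b + β * y := add_le_add (mul_le_mul_of_nonneg_left hab (sub_nonneg.mpr hβ1))
        (mul_le_mul_of_nonneg_left hxy hβ0)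
    _ = b + β * (y - b) := by ring

namespace LBQL

theorem innerL_le_innerU {S' D A : Type*} [Fintype A] [Nonempty A]
    (h : S' → A → D → S') (π : S' → A) (g : ℕ → S' → A → ℝ) (w : ℕ → D) :
    ∀ m t s a, innerL h π g w t m s a ≤ innerU h g w t m s a := by
  intro m
  induction m with
  | zero => intro t s a; simp [innerL, innerU]
  | succ m ih =>
    intro t s a
    simp only [innerL, innerU]
    gcongr
    exact (ih _ _ _).trans (le_ciSup (Set.finite_range _).bddAbove (π (h s a (w t))))

namespace Run

variable {S A W : Type*} [Fintype A] [Nonempty A] {f : S → A → W → S} {r : S → A → ℝ}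
  {γ ρ : ℝ} (R : Run f r γ ρ)

theorem L_succ_le_U_succ_at_visited (n : ℕ)
    (hn : R.L n (R.sn n) (R.an n) ≤ R.U n (R.sn n) (R.an n)) :
    R.L (n + 1) (R.sn n) (R.an n) ≤ R.U (n + 1) (R.sn n) (R.an n) := by
  rw [R.hLon n, R.hUon n]
  have hinner := innerL_le_innerU (habs f) (R.pol n)
    (fun t s' a' => rbar r s' a' - R.pen n t s' a') (R.path n)
    (R.tau n) 0 (some (R.sn n)) (R.an n)
  obtain ⟨hβ0, hβ1⟩ := R.hbeta n (R.sn n) (R.an n)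
  exact (min_le_right _ _).trans
    ((add_mul_sub_le_add_mul_sub hβ0 hβ1 hn hinner).trans (le_max_right _ _))

theorem L_le_U (h0 : ∀ s a, R.L 0 s a ≤ R.U 0 s a) : ∀ n s a, R.L n s a ≤ R.U n s a := by
  intro n
  induction n with
  | zero => exact h0
  | succ n ih =>
    intro s a
    by_cases hvisit : s = R.sn n ∧ a = R.an n
    · obtain ⟨rfl, rfl⟩ := hvisit
      exact R.L_succ_le_U_succ_at_visited n (ih _ _)
    · rw [R.hLoff n s a hvisit, R.hUoff n s a hvisit]
      exact ih s a

end Run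

end LBQL

theorem statement12_general
    {S A W : Type*} [Fintype A] [Nonempty A]
    (γ ρ : ℝ)
    (f : S → A → W → S) (r : S → A → ℝ)
    (R : Run f r γ ρ)
    (hLU0 : ∀ s a, R.L 0 s a ≤ R.U 0 s a) :
    ∀ n s a, R.L n s a ≤ R.U n s a :=
  R.L_le_U hLU0

/-- **Lemma 1: consistency of bounds.**
In the LBQL algorithm (empirical batch penalties, stepsizes `α_n ≤ 1`, the same sample
path and the same penalty values in both inner problems), if `L_0 (s,a) ≤ U_0 (s,a)` for
all `(s,a)` and `|Q'_0 (s,a)| ≤ ρ`, then `L_n (s,a) ≤ U_n (s,a)` for all iterations `n`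
and all state-action pairs `(s,a)`. -/
theorem statement12
    {S A W : Type*} [Fintype S] [Fintype A] [Fintype W]
    [Nonempty S] [Nonempty A] [Nonempty W]
    (γ Rmax ρ : ℝ) (hγ0 : 0 < γ) (hγ1 : γ < 1)
    (f : S → A → W → S) (r : S → A → ℝ)
    (hr : ∀ s a, |r s a| ≤ Rmax) (hρ : ρ = Rmax / (1 - γ))
    (K : ℕ) (hK : 0 < K)
    (R : Run f r γ ρ)
    (batch : ℕ → ℕ → Option S → A → Fin K → Bool × W)
    (hpen : ∀ n t s' a', R.pen n t s' a' =
      penB f K (ext0 (R.Q (n + 1))) (R.pol n) (R.path n) (batch n) t s' a')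
    (hLU0 : ∀ s a, R.L 0 s a ≤ R.U 0 s a)
    (hQ'0 : ∀ s a, |R.Q' 0 s a| ≤ ρ) :
    ∀ n s a, R.L n s a ≤ R.U n s a :=
  statement12_general γ ρ f r R hLU0
end

section
/- Sandwich lemma for the projected iterates: let D > 0, epsilon in (0,1), and nu a nonnegative integer. Suppose the sequences of functions Q'_n, Q_n, L_n, U_n, the noise terms xi_{n+1}(s,a), and stepsizes alpha_n(s,a) in [0,1] satisfy, for all n >= nu and all (s,a): (i) max{-D, L_n(s,a)} <= Q'_n(s,a) <= min{D, U_n(s,a)}; (ii) |W_{n,nu}(s,a)| <= gamma*epsilon*D, where W_{nu,nu}(s,a) = 0 and W_{n+1,nu}(s,a) = (1 - alpha_n(s,a)) W_{n,nu}(s,a) + alpha_n(s,a) xi_{n+1}(s,a); (iii) L_n(s,a) <= gamma*D - gamma*epsilon*D and gamma*epsilon*D - gamma*D <= U_n(s,a); (iv) L_n(s,a) <= U_n(s,a); and the updates Q_{n+1}(s,a) = (1 - alpha_n(s,a)) Q'_n(s,a) + alpha_n(s,a)[(H Q'_n)(s,a) + xi_{n+1}(s,a)] and Q'_{n+1}(s,a)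 = max{L_{n+1}(s,a), min{U_{n+1}(s,a), Q_{n+1}(s,a)}} hold. Define Y_nu(s,a) = D and Y_{n+1}(s,a) = (1 - alpha_n(s,a)) Y_n(s,a) + alpha_n(s,a) gamma D. Then for all n >= nu and all (s,a): Q'_n(s,a) <= min{U_n(s,a), Y_n(s,a) + W_{n,nu}(s,a)} and max{L_n(s,a), -Y_n(s,a) + W_{n,nu}(s,a)} <= Q'_n(s,a). -/
open MeasureTheory ProbabilityTheory Filter

open LBQL

/-!
The deviation `Q'_n - W_{n,ν}` stays in the band `[-Y_n, Y_n]`. Since `|Q'_n| ≤ D`, the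
contraction bound gives `|H Q'_n| ≤ γ D`, so the unprojected update moves the deviation by
the same convex combination that defines `Y_{n+1}`. The projection onto `[L_{n+1}, U_{n+1}]`
cannot leave the band: `Y ≥ γ D` and `|W| ≤ γ ε D` put `L_{n+1}` below its top and `U_{n+1}`
above its bottom, by (iii).
-/

lemma le_of_recurrence_convex_comb {y α : ℕ → ℝ} {c : ℝ} {ν₀ : ℕ}
    (hα : ∀ n, 0 ≤ α n ∧ α n ≤ 1) (h₀ : c ≤ y ν₀)
    (hrec : ∀ n, ν₀ ≤ n → y (n + 1) = (1 - α n) * y n + α n * c) :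
    ∀ n, ν₀ ≤ n → c ≤ y n := by
  intro n hn
  induction n, hn using Nat.le_induction with
  | base => exact h₀
  | succ n hn ih =>
    rw [hrec n hn]
    nlinarith [hα n]

lemma abs_convex_update_sub_le {q w h ξ α y c : ℝ} (hα₀ : 0 ≤ α) (hα₁ : α ≤ 1)
    (hq : |q - w| ≤ y) (hh : |h| ≤ c) :
    |(1 - α) * q + α * (h + ξ) - ((1 - α) * w + α * ξ)| ≤ (1 - α) * y + α * c :=
  calc |(1 - α) * q + α * (h + ξ) - ((1 - α) * w + α * ξ)|
      = |(1 - α) * (q - w) + α * h| := by congr 1; ring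
    _ ≤ (1 - α) * |q - w| + α * |h| := by
      refine (abs_add_le _ _).trans_eq ?_
      rw [abs_mul, abs_mul, abs_of_nonneg (sub_nonneg.2 hα₁), abs_of_nonneg hα₀]
    _ ≤ (1 - α) * y + α * c := by gcongr

lemma abs_clamp_sub_le {l u q w y : ℝ} (hq : |q - w| ≤ y) (hl : l ≤ w + y) (hu : w - y ≤ u) :
    |max l (min u q) - w| ≤ y := by
  obtain ⟨hq₁, hq₂⟩ := abs_sub_le_iff.1 hq
  rw [abs_sub_le_iff]
  constructor
  · have : min u q ≤ w + y := (min_le_right _ _).trans (by linarith)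
    linarith [max_le hl this]
  · have : w - y ≤ min u q := le_min hu (by linarith)
    linarith [le_max_right l (min u q)]

lemma abs_apply_le_of_forall_abs_le {S A : Type*} {γ D : ℝ}
    {H : (S → A → ℝ) → S → A → ℝ}
    (hH : ∀ (Q : S → A → ℝ) (s : S) (a : A), |H Q s a| ≤ γ * ⨆ p : S × A, |Q p.1 p.2|)
    (hγ : 0 ≤ γ) (hD : 0 ≤ D) {Q : S → A → ℝ} (hQ : ∀ s a, |Q s a| ≤ D) (s : S) (a : A) :
    |H Q s a| ≤ γ * D :=
  (hH Q s a).trans <| mul_le_mul_of_nonneg_left (Real.iSup_le (fun p => hQ p.1 p.2) hD) hγ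

theorem statement15_general
    {S A : Type*}
    (γ : ℝ) (hγ0 : 0 < γ) (hγ1 : γ < 1)
    (D ε : ℝ) (hD : 0 < D)
    (ν₀ : ℕ)
    (H : (S → A → ℝ) → S → A → ℝ)
    (hH : ∀ (Q : S → A → ℝ) (s : S) (a : A), |H Q s a| ≤ γ * ⨆ p : S × A, |Q p.1 p.2|)
    (Q Q' L U Y Wn : ℕ → S → A → ℝ)
    (ξ : ℕ → S → A → ℝ)
    (alpha : ℕ → S → A → ℝ)
    (halpha : ∀ n s a, 0 ≤ alpha n s a ∧ alpha n s a ≤ 1)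
    (hW0 : ∀ s a, Wn ν₀ s a = 0)
    (hWrec : ∀ n, ν₀ ≤ n → ∀ s a,
      Wn (n + 1) s a = (1 - alpha n s a) * Wn n s a + alpha n s a * ξ (n + 1) s a)
    (hY0 : ∀ s a, Y ν₀ s a = D)
    (hYrec : ∀ n, ν₀ ≤ n → ∀ s a,
      Y (n + 1) s a = (1 - alpha n s a) * Y n s a + alpha n s a * (γ * D))
    (hsand : ∀ n, ν₀ ≤ n → ∀ s a,
      max (-D) (L n s a) ≤ Q' n s a ∧ Q' n s a ≤ min D (U n s a))
    (hWbd : ∀ n, ν₀ ≤ n → ∀ s a, |Wn n s a| ≤ γ * ε * D)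
    (hLUbd : ∀ n, ν₀ ≤ n → ∀ s a,
      L n s a ≤ γ * D - γ * ε * D ∧ γ * ε * D - γ * D ≤ U n s a)
    (hQrec : ∀ n, ν₀ ≤ n → ∀ s a, Q (n + 1) s a =
      (1 - alpha n s a) * Q' n s a + alpha n s a * (H (Q' n) s a + ξ (n + 1) s a))
    (hQ'rec : ∀ n, ν₀ ≤ n → ∀ s a, Q' (n + 1) s a =
      max (L (n + 1) s a) (min (U (n + 1) s a) (Q (n + 1) s a))) :
    ∀ n, ν₀ ≤ n → ∀ s a,
      Q' n s a ≤ min (U n s a) (Y n s a + Wn n s a) ∧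
        max (L n s a) (-(Y n s a) + Wn n s a) ≤ Q' n s a := by
  have hQ'bd : ∀ n, ν₀ ≤ n → ∀ s a, |Q' n s a| ≤ D := fun n hn s a =>
    abs_le.2 ⟨(le_max_left _ _).trans (hsand n hn s a).1,
      (hsand n hn s a).2.trans (min_le_left _ _)⟩
  have hY : ∀ n, ν₀ ≤ n → ∀ s a, γ * D ≤ Y n s a := fun n hn s a =>
    le_of_recurrence_convex_comb (y := fun n => Y n s a) (fun n => halpha n s a)
      (by rw [hY0]; nlinarith) (fun n hn => hYrec n hn s a) n hn
  have hdev : ∀ n, ν₀ ≤ n → ∀ s a, |Q' n s a - Wn n s a| ≤ Y n s a := by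
    intro n hn
    induction n, hn using Nat.le_induction with
    | base => intro s a; simpa [hW0, hY0] using hQ'bd ν₀ le_rfl s a
    | succ n hn ih =>
      intro s a
      have hQ : |Q (n + 1) s a - Wn (n + 1) s a| ≤ Y (n + 1) s a := by
        rw [hQrec n hn, hWrec n hn, hYrec n hn]
        exact abs_convex_update_sub_le (halpha n s a).1 (halpha n s a).2 (ih s a)
          (abs_apply_le_of_forall_abs_le hH hγ0.le hD.le (hQ'bd n hn) s a)
      have hW := abs_le.1 (hWbd (n + 1) (by omega) s a)
      have hYn := hY (n + 1) (by omega) s a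
      have hLU := hLUbd (n + 1) (by omega) s a
      rw [hQ'rec n hn]
      exact abs_clamp_sub_le hQ (by linarith [hLU.1]) (by linarith [hLU.2])
  intro n hn s a
  obtain ⟨hL, hU⟩ := hsand n hn s a
  obtain ⟨hdev₁, hdev₂⟩ := abs_sub_le_iff.1 (hdev n hn s a)
  exact ⟨le_min (hU.trans (min_le_right _ _)) (by linarith),
    max_le ((le_max_right _ _).trans hL) (by linarith)⟩

/-- **sandwich lemma for the projected iterates.**
Let `D > 0`, `ε ∈ (0,1)` and `ν₀` a nonnegative integer. Suppose that for all `n ≥ ν₀`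
and all `(s,a)`:
(i) `max (-D, L_n) ≤ Q'_n ≤ min (D, U_n)`;
(ii) `|W_{n,ν₀}| ≤ γ ε D`, where `W_{ν₀,ν₀} = 0` and
`W_{n+1,ν₀} = (1 - α_n) W_{n,ν₀} + α_n ξ_{n+1}`;
(iii) `L_n ≤ γ D - γ ε D` and `γ ε D - γ D ≤ U_n`;
(iv) `L_n ≤ U_n`;
and the updates `Q_{n+1} = (1 - α_n) Q'_n + α_n (H Q'_n + ξ_{n+1})` and
`Q'_{n+1} = max (L_{n+1}, min (U_{n+1}, Q_{n+1}))` hold, where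
`|H Q (s,a)| ≤ γ max_{(s',a')} |Q (s',a')|`. With `Y_{ν₀} = D` and
`Y_{n+1} = (1 - α_n) Y_n + α_n γ D`, one has for all `n ≥ ν₀` and all `(s,a)`:
`Q'_n ≤ min (U_n, Y_n + W_{n,ν₀})` and `max (L_n, -Y_n + W_{n,ν₀}) ≤ Q'_n`. -/
theorem statement15
    {S A : Type*} [Fintype S] [Fintype A] [Nonempty S] [Nonempty A]
    (γ : ℝ) (hγ0 : 0 < γ) (hγ1 : γ < 1)
    (D ε : ℝ) (hD : 0 < D) (hε0 : 0 < ε) (hε1 : ε < 1)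
    (ν₀ : ℕ)
    (H : (S → A → ℝ) → S → A → ℝ)
    (hH : ∀ (Q : S → A → ℝ) (s : S) (a : A), |H Q s a| ≤ γ * ⨆ p : S × A, |Q p.1 p.2|)
    (Q Q' L U Y Wn : ℕ → S → A → ℝ)
    (ξ : ℕ → S → A → ℝ)
    (alpha : ℕ → S → A → ℝ)
    (halpha : ∀ n s a, 0 ≤ alpha n s a ∧ alpha n s a ≤ 1)
    (hW0 : ∀ s a, Wn ν₀ s a = 0)
    (hWrec : ∀ n, ν₀ ≤ n → ∀ s a,
      Wn (n + 1) s a = (1 - alpha n s a) * Wn n s a + alpha n s a * ξ (n + 1) s a)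
    (hY0 : ∀ s a, Y ν₀ s a = D)
    (hYrec : ∀ n, ν₀ ≤ n → ∀ s a,
      Y (n + 1) s a = (1 - alpha n s a) * Y n s a + alpha n s a * (γ * D))
    (hsand : ∀ n, ν₀ ≤ n → ∀ s a,
      max (-D) (L n s a) ≤ Q' n s a ∧ Q' n s a ≤ min D (U n s a))
    (hWbd : ∀ n, ν₀ ≤ n → ∀ s a, |Wn n s a| ≤ γ * ε * D)
    (hLUbd : ∀ n, ν₀ ≤ n → ∀ s a,
      L n s a ≤ γ * D - γ * ε * D ∧ γ * ε * D - γ * D ≤ U n s a)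
    (hLU : ∀ n, ν₀ ≤ n → ∀ s a, L n s a ≤ U n s a)
    (hQrec : ∀ n, ν₀ ≤ n → ∀ s a, Q (n + 1) s a =
      (1 - alpha n s a) * Q' n s a + alpha n s a * (H (Q' n) s a + ξ (n + 1) s a))
    (hQ'rec : ∀ n, ν₀ ≤ n → ∀ s a, Q' (n + 1) s a =
      max (L (n + 1) s a) (min (U (n + 1) s a) (Q (n + 1) s a))) :
    ∀ n, ν₀ ≤ n → ∀ s a,
      Q' n s a ≤ min (U n s a) (Y n s a + Wn n s a) ∧
        max (L n s a) (-(Y n s a) + Wn n s a) ≤ Q' n s a :=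
  statement15_general γ hγ0 hγ1 D ε hD ν₀ H hH Q Q' L U Y Wn ξ alpha halpha hW0 hWrec hY0 hYrec
    hsand hWbd hLUbd hQrec hQ'rec
end
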